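/- For n ≥ 2 and 0 < b < 1, the Lebesgue volume of the spherical cap region Cap_{n,b} = B_{n,1} ∩ { y : ||y - e_1||_2 ≤ a }, where a^2 = 2 - 2·sqrt(1 - b^2) (so the cap base has radius b), satisfies V(Cap_{n,b}) > (b/(4n)) · V(B_{n,b}), where B_{n,b} is the ball of radius b. -/

import Mathlib

/-!
Let `h = √(1 - b²)`, so that the cap is the part of the unit ball with first coordinate at least `h`.
Squash the ball `B(0, b)` by a factor `λ = θ (1 - θ) b` along `e₁` and by `θ` across, and put the
result on top of the hyperplane `x₁ = h`. Completing a square shows that this ellipsoid stays in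
the unit ball, so it lies in the cap, and its volume is `λ θⁿ⁻¹ = b θⁿ / (2n)` times that of
`B(0, b)` when `θ = 1 - 1/(2n)`. Bernoulli's inequality gives `θⁿ > 1/2`.
-/

open MeasureTheory Finset

theorem norm_sub_le_sqrt_of_le_inner {F : Type*} [NormedAddCommGroup F] [InnerProductSpace ℝ F]
    {z v : F} {h : ℝ} (hz : ‖z‖ ≤ 1) (hv : ‖v‖ = 1) (hzv : h ≤ inner ℝ z v) :
    ‖z - v‖ ≤ √(2 - 2 * h) := by
  apply Real.le_sqrt_of_sq_le
  rw [norm_sub_sq_real, hv]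
  nlinarith [norm_nonneg z]

theorem half_lt_one_sub_inv_pow {n : ℕ} (hn : 2 ≤ n) : 1 / 2 < (1 - 1 / (2 * n : ℝ)) ^ n := by
  obtain ⟨m, rfl⟩ : ∃ m, n = m + 1 := ⟨n - 1, by omega⟩
  set a : ℝ := 1 / (2 * (m + 1 : ℕ))
  have hm : (1 : ℝ) ≤ m := by exact_mod_cast (by omega : 1 ≤ m)
  have ha : 0 < a := by positivity
  have hma : (m + 1) * a = 1 / 2 := by simp only [a]; push_cast; field_simp
  have hbern := one_add_mul_le_pow (a := -a) (by nlinarith) m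
  rw [sub_eq_add_neg, pow_succ]
  calc (1 / 2 : ℝ) < (1 + m * -a) * (1 + -a) := by nlinarith
    _ ≤ (1 + -a) ^ m * (1 + -a) := by gcongr; nlinarith

theorem div_four_mul_lt_mul_pow {n : ℕ} (hn : 2 ≤ n) {b θ : ℝ} (hb : 0 < b)
    (hθ : θ = 1 - 1 / (2 * n)) : b / (4 * n) < θ * (1 - θ) * b * θ ^ (n - 1) := by
  have hθn : θ * θ ^ (n - 1) = θ ^ n := by rw [← pow_succ', Nat.sub_add_cancel (by omega)]
  calc b / (4 * n) = b / (2 * n) * (1 / 2) := by field_simp; ring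
    _ < b / (2 * n) * θ ^ n := by gcongr; exact hθ ▸ half_lt_one_sub_inv_pow hn
    _ = θ * (1 - θ) * b * θ ^ (n - 1) := by rw [← hθn, hθ]; ring

theorem sqrt_one_sub_sq_add_mul_sq_add_le_one {b θ u S : ℝ} (hb : 0 ≤ b) (hb1 : b ≤ 1)
    (hθ0 : 0 ≤ θ) (hθ1 : θ ≤ 1) (hu : 0 ≤ u) (hS : 0 ≤ S) (huS : (u - b) ^ 2 + S ≤ b ^ 2) :
    (√(1 - b ^ 2) + θ * (1 - θ) * b * u) ^ 2 + θ ^ 2 * S ≤ 1 := by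
  set h := √(1 - b ^ 2)
  set w := θ * (1 - θ) * b * u
  have hh : h ^ 2 = 1 - b ^ 2 := Real.sq_sqrt (by nlinarith)
  have hh0 : 0 ≤ h := Real.sqrt_nonneg _
  have hh1 : h ≤ 1 - b ^ 2 / 2 := by nlinarith
  have hu2 : u ≤ 2 * b := by nlinarith
  have hw0 : 0 ≤ w := mul_nonneg (mul_nonneg (mul_nonneg hθ0 (by linarith)) hb) hu
  have hw : w ≤ b ^ 2 / 2 := by nlinarith [sq_nonneg (θ - 1 / 2), mul_nonneg hb hu]
  have hsq : (h + w) ^ 2 ≤ h ^ 2 + 2 * w := by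
    nlinarith [mul_nonneg hw0 (by linarith : 0 ≤ 2 - 2 * h - w)]
  -- `2 w + θ² (2 b u - u²) = b² - (θ u - b)²`
  have hSw : 2 * w + θ ^ 2 * S ≤ b ^ 2 := by
    nlinarith [sq_nonneg (θ * u - b),
      mul_le_mul_of_nonneg_left (by linarith : S ≤ 2 * b * u - u ^ 2) (sq_nonneg θ)]
  linarith

namespace EuclideanSpace

variable {ι : Type*} [Fintype ι] [DecidableEq ι]

theorem real_norm_sq_eq_sq_add_sum_erase (x : EuclideanSpace ℝ ι) (i : ι) :
    ‖x‖ ^ 2 = x i ^ 2 + ∑ j ∈ univ.erase i, x j ^ 2 := by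
  rw [real_norm_sq_eq, add_sum_erase univ (fun j ↦ x j ^ 2) (mem_univ i)]

noncomputable def axisScaling (i : ι) (s t : ℝ) : EuclideanSpace ℝ ι →ₗ[ℝ] EuclideanSpace ℝ ι :=
  Matrix.toLpLin 2 2 (Matrix.diagonal (Function.update (fun _ ↦ t) i s))

theorem axisScaling_apply_self (i : ι) (s t : ℝ) (x : EuclideanSpace ℝ ι) :
    axisScaling i s t x i = s * x i := by
  simp [axisScaling, Matrix.mulVec_diagonal]

theorem axisScaling_apply_of_ne {i j : ι} (hji : j ≠ i) (s t : ℝ) (x : EuclideanSpace ℝ ι) :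
    axisScaling i s t x j = t * x j := by
  simp [axisScaling, Matrix.mulVec_diagonal, hji]

theorem det_axisScaling (i : ι) (s t : ℝ) :
    LinearMap.det (axisScaling i s t) = s * t ^ (Fintype.card ι - 1) := by
  rw [axisScaling, LinearMap.det_toLpLin, Matrix.det_diagonal, prod_update_of_mem (mem_univ i),
    prod_const, card_univ_sdiff, card_singleton]

def cap (i : ι) (b : ℝ) : Set (EuclideanSpace ℝ ι) :=
  Metric.closedBall 0 1 ∩ {y | ‖y - single i 1‖ ≤ √(2 - 2 * √(1 - b ^ 2))}

/-- `y ↦ (h + λ b) eᵢ + diag(λ, θ, …, θ) y` with `h = √(1 - b²)` and `λ = θ (1 - θ) b`: it maps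
`B(0, b)` onto an ellipsoid touching the hyperplane `xᵢ = h` from above. -/
noncomputable def capEllipsoidMap (i : ι) (b θ : ℝ) (y : EuclideanSpace ℝ ι) :
    EuclideanSpace ℝ ι :=
  single i (√(1 - b ^ 2) + θ * (1 - θ) * b * b) + axisScaling i (θ * (1 - θ) * b) θ y

theorem capEllipsoidMap_apply_self (i : ι) (b θ : ℝ) (y : EuclideanSpace ℝ ι) :
    capEllipsoidMap i b θ y i = √(1 - b ^ 2) + θ * (1 - θ) * b * (y i + b) := by
  rw [capEllipsoidMap, PiLp.add_apply, axisScaling_apply_self, PiLp.single_apply, if_pos rfl]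
  ring

theorem capEllipsoidMap_apply_of_ne {i j : ι} (hji : j ≠ i) (b θ : ℝ) (y : EuclideanSpace ℝ ι) :
    capEllipsoidMap i b θ y j = θ * y j := by
  rw [capEllipsoidMap, PiLp.add_apply, axisScaling_apply_of_ne hji, PiLp.single_apply, if_neg hji,
    zero_add]

theorem capEllipsoidMap_mem_cap {i : ι} {b θ : ℝ} (hb : 0 ≤ b) (hb1 : b ≤ 1) (hθ0 : 0 ≤ θ)
    (hθ1 : θ ≤ 1) {y : EuclideanSpace ℝ ι} (hy : ‖y‖ ≤ b) :
    capEllipsoidMap i b θ y ∈ cap i b := by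
  set z := capEllipsoidMap i b θ y
  set S := ∑ j ∈ univ.erase i, y j ^ 2
  have hS : 0 ≤ S := sum_nonneg fun j _ ↦ sq_nonneg _
  have hyS : (y i + b - b) ^ 2 + S ≤ b ^ 2 := by
    rw [add_sub_cancel_right, ← real_norm_sq_eq_sq_add_sum_erase]
    gcongr
  have hu : 0 ≤ y i + b := by nlinarith
  have hzi : √(1 - b ^ 2) ≤ z i := by
    rw [capEllipsoidMap_apply_self]
    have := mul_nonneg (mul_nonneg (mul_nonneg hθ0 (sub_nonneg.2 hθ1)) hb) hu
    linarith
  have hz : ‖z‖ ≤ 1 := by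
    have hzS : ‖z‖ ^ 2 = (√(1 - b ^ 2) + θ * (1 - θ) * b * (y i + b)) ^ 2 + θ ^ 2 * S := by
      rw [real_norm_sq_eq_sq_add_sum_erase z i, capEllipsoidMap_apply_self, mul_sum]
      congr 1
      refine sum_congr rfl fun j hj ↦ ?_
      rw [capEllipsoidMap_apply_of_ne (ne_of_mem_erase hj), mul_pow]
    refine (sq_le_one_iff₀ (norm_nonneg z)).1 ?_
    rw [hzS]
    exact sqrt_one_sub_sq_add_mul_sq_add_le_one hb hb1 hθ0 hθ1 hu hS hyS
  refine ⟨mem_closedBall_zero_iff.2 hz, norm_sub_le_sqrt_of_le_inner hz (by simp) ?_⟩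
  rwa [inner_single_right, one_mul, conj_trivial]

theorem volume_image_capEllipsoidMap (i : ι) (b θ : ℝ) (s : Set (EuclideanSpace ℝ ι)) :
    volume (capEllipsoidMap i b θ '' s) =
      ENNReal.ofReal |θ * (1 - θ) * b * θ ^ (Fintype.card ι - 1)| * volume s := by
  have : capEllipsoidMap i b θ '' s = (single i (√(1 - b ^ 2) + θ * (1 - θ) * b * b) + ·) ''
      (axisScaling i (θ * (1 - θ) * b) θ '' s) := by
    rw [Set.image_image]; rfl
  rw [this, Set.image_add_left, measure_preimage_add, Measure.addHaar_image_linearMap,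
    det_axisScaling]

end EuclideanSpace

open EuclideanSpace in
theorem cap_volume_lower_bound (n : ℕ) (hn : 2 ≤ n) (b : ℝ) (hb0 : 0 < b) (hb1 : b < 1) :
    volume (Metric.closedBall (0 : EuclideanSpace ℝ (Fin n)) 1 ∩
        {y : EuclideanSpace ℝ (Fin n) |
          ‖y - EuclideanSpace.single (⟨0, by omega⟩ : Fin n) 1‖ ≤
            Real.sqrt (2 - 2 * Real.sqrt (1 - b ^ 2))}) >
      ENNReal.ofReal (b / (4 * n)) *
        volume (Metric.closedBall (0 : EuclideanSpace ℝ (Fin n)) b) := by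
  set i : Fin n := ⟨0, by omega⟩
  set θ : ℝ := 1 - 1 / (2 * n)
  have hn' : (2 : ℝ) ≤ n := by exact_mod_cast hn
  have hθ0 : 0 ≤ θ := by
    have : 1 / (2 * n : ℝ) ≤ 1 := (div_le_one (by positivity)).2 (by linarith)
    linarith
  have hθ1 : θ ≤ 1 := by
    have : 0 ≤ 1 / (2 * n : ℝ) := by positivity
    linarith
  have hdet := div_four_mul_lt_mul_pow hn hb0 rfl
  have hdet_pos : 0 < θ * (1 - θ) * b * θ ^ (n - 1) := lt_trans (by positivity) hdet
  have hsub : capEllipsoidMap i b θ '' Metric.closedBall 0 b ⊆ cap i b := by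
    rintro _ ⟨y, hy, rfl⟩
    exact capEllipsoidMap_mem_cap hb0.le hb1.le hθ0 hθ1 (mem_closedBall_zero_iff.1 hy)
  calc ENNReal.ofReal (b / (4 * n)) * volume (Metric.closedBall (0 : EuclideanSpace ℝ (Fin n)) b)
      < ENNReal.ofReal (θ * (1 - θ) * b * θ ^ (n - 1)) * volume (Metric.closedBall 0 b) :=
        ENNReal.mul_lt_mul_left (Metric.measure_closedBall_pos volume 0 hb0).ne'
          measure_closedBall_lt_top.ne ((ENNReal.ofReal_lt_ofReal_iff hdet_pos).2 hdet)
    _ = volume (capEllipsoidMap i b θ '' Metric.closedBall 0 b) := by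
        rw [volume_image_capEllipsoidMap, Fintype.card_fin, abs_of_pos hdet_pos]
    _ ≤ volume (cap i b) := measure_mono hsub
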